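/- Under the even setup, fix two distinct vertices u, v of G with deg(u) = deg(v) = β, set ε = 1 if uv is an edge of G and ε = 0 otherwise, and set c = β − n − ε. If c ≥ 1, then the complement graph of G has at least n² − n + c² − ε edges. -/
import Mathlib


open SimpleGraph
open Finset

set_option maxHeartbeats 2000000

section Helpers


lemma arith_key (z dxc dyc icc w0 g hc2 loc SZ SDx SDy SIc SU SW SHi SLo ST' ST : ℤ)
    (h1 : SZ + z ≤ z * w0) (h2 : SDx + dxc ≤ dxc * (z + dxc))
    (h3 : SDy + dyc ≤ dyc * (z + dyc)) (h4 : SIc ≤ icc * z)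
    (h5 : SZ + SU = SW) (h6 : SU = SDx + SDy + SIc)
    (h7 : ST' + (g + g) = ST) (h8 : SHi + SLo = ST') (h9 : loc * g ≤ SLo)
    (h10 : hc2 * hc2 ≤ 2 * SHi + hc2) (h11 : hc2 ≤ g) (h12 : g = z + dxc)
    (h13 : dyc = dxc) (h14 : w0 ≤ loc + hc2) (h15 : w0 = z + dxc + dyc + icc)
    (hic : 0 ≤ icc) (hz : 0 ≤ z) (hdx : 0 ≤ dxc) (hg : 0 ≤ g) (hloc : 0 ≤ loc)
    (hc2n : 0 ≤ hc2) :
    SW ≤ 2 * ST := by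
  nlinarith [sq_nonneg (g - hc2), mul_nonneg hic hdx,
    mul_le_mul_of_nonneg_right (show w0 - hc2 ≤ loc by linarith) hg]


lemma sq_card_le_two_sum (s : Finset ℕ) : s.card * s.card ≤ 2 * (∑ i ∈ s, i) + s.card := by
  induction s using Finset.strongInduction with
  | _ s ih =>
    rcases s.eq_empty_or_nonempty with rfl | hne
    · simp
    · have hMs : s.max' hne ∈ s := s.max'_mem hne
      have hsub : s ⊆ Finset.range (s.max' hne + 1) :=
        fun x hx => Finset.mem_range.2 (Nat.lt_succ_of_le (s.le_max' x hx))
      have hcard : s.card ≤ s.max' hne + 1 := by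
        simpa using Finset.card_le_card hsub
      have h2 := ih (s.erase (s.max' hne)) (Finset.erase_ssubset hMs)
      have hc : (s.erase (s.max' hne)).card = s.card - 1 := Finset.card_erase_of_mem hMs
      have hsum : s.max' hne + ∑ i ∈ s.erase (s.max' hne), i = ∑ i ∈ s, i :=
        Finset.add_sum_erase s id hMs
      rw [hc] at h2
      obtain ⟨k, hk⟩ : ∃ k, s.card = k + 1 := ⟨s.card - 1, by
        have := Finset.card_pos.2 hne; omega⟩
      rw [hk] at hcard h2 ⊢
      simp only [Nat.add_sub_cancel] at h2
      nlinarith [h2, hcard, hsum]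

set_option maxHeartbeats 1000000 in
lemma key_lemma {V : Type*} [Fintype V] [DecidableEq V] (G : SimpleGraph V) [DecidableRel G.Adj]
    (W T : Finset V) (hcard : W.card + 2 ≤ T.card)
    (hcon : ∀ x ∈ T, ∀ y ∈ T, x ≠ y →
      (G.neighborFinset x ∩ W).card = (G.neighborFinset y ∩ W).card →
      ∀ p ∈ G.neighborFinset x ∩ W, ∀ q ∈ G.neighborFinset y ∩ W, p ≠ q → ¬ G.Adj p q) :
    ∑ w ∈ W, (G.neighborFinset w ∩ W).card
      ≤ 2 * ∑ x ∈ T, (W.card - (G.neighborFinset x ∩ W).card) := by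
  classical
  set w0 := W.card with hw0
  set f : V → ℕ := fun x => (G.neighborFinset x ∩ W).card with hfdef
  have hfle : ∀ x, f x ≤ w0 := fun x => card_le_card inter_subset_right
  -- pigeonhole: a repeated value exists
  have hpig : ∃ x ∈ T, ∃ y ∈ T, x ≠ y ∧ f x = f y := by
    apply Finset.exists_ne_map_eq_of_card_lt_of_maps_to (t := Finset.range (w0 + 1))
    · rw [Finset.card_range]; omega
    · exact fun a _ => Finset.mem_range.2 (Nat.lt_succ_of_le (hfle a))
  set VR := (Finset.range (w0 + 1)).filter
    (fun k => ∃ x ∈ T, ∃ y ∈ T, x ≠ y ∧ f x = k ∧ f y = k) with hVR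
  have hVRne : VR.Nonempty := by
    obtain ⟨x, hx, y, hy, hxy, hfxy⟩ := hpig
    exact ⟨f x, Finset.mem_filter.2 ⟨Finset.mem_range.2 (Nat.lt_succ_of_le (hfle x)),
      ⟨x, hx, y, hy, hxy, rfl, hfxy.symm⟩⟩⟩
  set v := VR.max' hVRne with hvdef
  have hvmem : v ∈ VR := VR.max'_mem hVRne
  obtain ⟨hvrange, x, hx, y, hy, hxy, hfx, hfy⟩ := Finset.mem_filter.1 hvmem
  have hmax : ∀ p ∈ T, ∀ q ∈ T, p ≠ q → f p = f q → f p ≤ v := by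
    intro p hp q hq hpq hfpq
    apply VR.le_max' _
    exact Finset.mem_filter.2 ⟨Finset.mem_range.2 (Nat.lt_succ_of_le (hfle p)),
      ⟨p, hp, q, hq, hpq, rfl, hfpq.symm⟩⟩
  set Sx := G.neighborFinset x ∩ W with hSx
  set Sy := G.neighborFinset y ∩ W with hSy
  set Dx := Sx \ Sy with hDx
  set Dy := Sy \ Sx with hDy
  set Ic := Sx ∩ Sy with hIc
  set Z := W \ (Sx ∪ Sy) with hZ
  have hSxW : Sx ⊆ W := inter_subset_right
  have hSyW : Sy ⊆ W := inter_subset_right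
  have hSxc : Sx.card = v := hfx
  have hSyc : Sy.card = v := hfy
  -- forbidden adjacency facts
  have hnoxy : ∀ p ∈ Sx, ∀ q ∈ Sy, p ≠ q → ¬ G.Adj p q := by
    intro p hp q hq hpq
    exact hcon x hx y hy hxy (hSxc.trans hSyc.symm) p hp q hq hpq
  have hnoyx : ∀ p ∈ Sy, ∀ q ∈ Sx, p ≠ q → ¬ G.Adj p q := by
    intro p hp q hq hpq
    exact hcon y hy x hx hxy.symm (hSyc.trans hSxc.symm) p hp q hq hpq
  -- pointwise bounds
  have hZb : ∀ p ∈ Z, f p + 1 ≤ w0 := by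
    intro p hp
    have hpW : p ∈ W := (Finset.mem_sdiff.1 hp).1
    have hsub : G.neighborFinset p ∩ W ⊆ W.erase p := by
      intro q hq
      rw [Finset.mem_erase]
      refine ⟨?_, (Finset.mem_inter.1 hq).2⟩
      have : G.Adj p q := by
        have := (Finset.mem_inter.1 hq).1; rwa [mem_neighborFinset] at this
      exact this.ne'
    have h1 := card_le_card hsub
    rw [Finset.card_erase_of_mem hpW] at h1
    have : 1 ≤ w0 := Finset.card_pos.2 ⟨p, hpW⟩
    simp only [hfdef]; omega
  have hIb : ∀ p ∈ Ic, f p ≤ Z.card := by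
    intro p hp
    have hpSx : p ∈ Sx := (Finset.mem_inter.1 hp).1
    have hpSy : p ∈ Sy := (Finset.mem_inter.1 hp).2
    have hsub : G.neighborFinset p ∩ W ⊆ Z := by
      intro q hq
      have hqW : q ∈ W := (Finset.mem_inter.1 hq).2
      have hadj : G.Adj p q := by
        have := (Finset.mem_inter.1 hq).1; rwa [mem_neighborFinset] at this
      rw [hZ, Finset.mem_sdiff]
      refine ⟨hqW, fun hqU => ?_⟩
      rcases Finset.mem_union.1 hqU with hqSx | hqSy
      · exact hnoyx p hpSy q hqSx hadj.ne hadj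
      · exact hnoxy p hpSx q hqSy hadj.ne hadj
    exact card_le_card hsub
  have hDxb : ∀ p ∈ Dx, f p + 1 ≤ Z.card + Dx.card := by
    intro p hp
    have hpSx : p ∈ Sx := (Finset.mem_sdiff.1 hp).1
    have hsub : G.neighborFinset p ∩ W ⊆ (Z ∪ Dx).erase p := by
      intro q hq
      have hqW : q ∈ W := (Finset.mem_inter.1 hq).2
      have hadj : G.Adj p q := by
        have := (Finset.mem_inter.1 hq).1; rwa [mem_neighborFinset] at this
      have hqSy : q ∉ Sy := fun hqSy => hnoxy p hpSx q hqSy hadj.ne hadj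
      rw [Finset.mem_erase]
      refine ⟨hadj.ne', ?_⟩
      rw [Finset.mem_union, hZ, hDx, Finset.mem_sdiff, Finset.mem_sdiff, Finset.mem_union]
      by_cases hqSx : q ∈ Sx
      · exact Or.inr ⟨hqSx, hqSy⟩
      · exact Or.inl ⟨hqW, fun h => h.elim hqSx hqSy⟩
    have h1 := card_le_card hsub
    have hpZD : p ∈ Z ∪ Dx := Finset.mem_union.2 (Or.inr hp)
    rw [Finset.card_erase_of_mem hpZD] at h1
    have h2 : (Z ∪ Dx).card ≤ Z.card + Dx.card := card_union_le _ _
    have h3 : 1 ≤ (Z ∪ Dx).card := Finset.card_pos.2 ⟨p, hpZD⟩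
    simp only [hfdef]; omega
  have hDyb : ∀ p ∈ Dy, f p + 1 ≤ Z.card + Dy.card := by
    intro p hp
    have hpSy : p ∈ Sy := (Finset.mem_sdiff.1 hp).1
    have hsub : G.neighborFinset p ∩ W ⊆ (Z ∪ Dy).erase p := by
      intro q hq
      have hqW : q ∈ W := (Finset.mem_inter.1 hq).2
      have hadj : G.Adj p q := by
        have := (Finset.mem_inter.1 hq).1; rwa [mem_neighborFinset] at this
      have hqSx : q ∉ Sx := fun hqSx => hnoyx p hpSy q hqSx hadj.ne hadj
      rw [Finset.mem_erase]
      refine ⟨hadj.ne', ?_⟩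
      rw [Finset.mem_union, hZ, hDy, Finset.mem_sdiff, Finset.mem_sdiff, Finset.mem_union]
      by_cases hqSy : q ∈ Sy
      · exact Or.inr ⟨hqSy, hqSx⟩
      · exact Or.inl ⟨hqW, fun h => h.elim hqSx hqSy⟩
    have h1 := card_le_card hsub
    have hpZD : p ∈ Z ∪ Dy := Finset.mem_union.2 (Or.inr hp)
    rw [Finset.card_erase_of_mem hpZD] at h1
    have h2 : (Z ∪ Dy).card ≤ Z.card + Dy.card := card_union_le _ _
    have h3 : 1 ≤ (Z ∪ Dy).card := Finset.card_pos.2 ⟨p, hpZD⟩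
    simp only [hfdef]; omega
  -- partition of W
  have hUsub : Sx ∪ Sy ⊆ W := Finset.union_subset hSxW hSyW
  have hsplitW : ∑ p ∈ Z, f p + ∑ p ∈ Sx ∪ Sy, f p = ∑ p ∈ W, f p :=
    Finset.sum_sdiff hUsub
  have hU : Sx ∪ Sy = (Dx ∪ Dy) ∪ Ic := by
    ext r
    simp only [hDx, hDy, hIc, Finset.mem_union, Finset.mem_sdiff, Finset.mem_inter]
    tauto
  have hdisj1 : Disjoint Dx Dy := by
    rw [Finset.disjoint_left]
    intro r hr hr'
    exact (Finset.mem_sdiff.1 hr).2 (Finset.mem_sdiff.1 hr').1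
  have hdisj2 : Disjoint (Dx ∪ Dy) Ic := by
    rw [Finset.disjoint_left]
    intro r hr hr'
    rcases Finset.mem_union.1 hr with h | h
    · exact (Finset.mem_sdiff.1 h).2 (Finset.mem_inter.1 hr').2
    · exact (Finset.mem_sdiff.1 h).2 (Finset.mem_inter.1 hr').1
  have hsumU : ∑ p ∈ Sx ∪ Sy, f p = (∑ p ∈ Dx, f p + ∑ p ∈ Dy, f p) + ∑ p ∈ Ic, f p := by
    rw [hU, Finset.sum_union hdisj2, Finset.sum_union hdisj1]
  have hcardU : (Sx ∪ Sy).card = (Dx.card + Dy.card) + Ic.card := by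
    rw [hU, Finset.card_union_of_disjoint hdisj2, Finset.card_union_of_disjoint hdisj1]
  -- sum bounds
  have hZsum : ∑ p ∈ Z, f p + Z.card ≤ Z.card * w0 := by
    have h1 : ∑ p ∈ Z, (f p + 1) ≤ ∑ p ∈ Z, w0 := Finset.sum_le_sum hZb
    simpa [Finset.sum_add_distrib, Finset.sum_const, Nat.smul_one_eq_cast, mul_comm] using h1
  have hDxsum : ∑ p ∈ Dx, f p + Dx.card ≤ Dx.card * (Z.card + Dx.card) := by
    have h1 : ∑ p ∈ Dx, (f p + 1) ≤ ∑ p ∈ Dx, (Z.card + Dx.card) := Finset.sum_le_sum hDxb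
    simpa [Finset.sum_add_distrib, Finset.sum_const, mul_comm] using h1
  have hDysum : ∑ p ∈ Dy, f p + Dy.card ≤ Dy.card * (Z.card + Dy.card) := by
    have h1 : ∑ p ∈ Dy, (f p + 1) ≤ ∑ p ∈ Dy, (Z.card + Dy.card) := Finset.sum_le_sum hDyb
    simpa [Finset.sum_add_distrib, Finset.sum_const, mul_comm] using h1
  have hIcsum : ∑ p ∈ Ic, f p ≤ Ic.card * Z.card := by
    have h1 : ∑ p ∈ Ic, f p ≤ ∑ p ∈ Ic, Z.card := Finset.sum_le_sum hIb
    simpa [Finset.sum_const, mul_comm] using h1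
  -- budget side
  set g' : V → ℕ := fun p => w0 - f p with hg'def
  have hvw0 : v ≤ w0 := hSxc ▸ card_le_card hSxW
  set g := w0 - v with hgdef
  have hgv : g + v = w0 := Nat.sub_add_cancel hvw0
  have hxyT : ({x, y} : Finset V) ⊆ T := by
    intro r hr
    rcases Finset.mem_insert.1 hr with rfl | hr
    · exact hx
    · rw [Finset.mem_singleton.1 hr]; exact hy
  have hsplitT : ∑ p ∈ T \ {x, y}, g' p + ∑ p ∈ ({x, y} : Finset V), g' p
      = ∑ p ∈ T, g' p := Finset.sum_sdiff hxyT
  have hg'xy : ∑ p ∈ ({x, y} : Finset V), g' p = g + g := by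
    rw [Finset.sum_pair hxy]
    simp only [hg'def, hfx, hfy, hgdef]
  set T' := T \ ({x, y} : Finset V) with hT'def
  set Hi := T'.filter (fun p => v < f p) with hHidef
  set Lo := T'.filter (fun p => ¬ v < f p) with hLodef
  have hHiLo : ∑ p ∈ Hi, g' p + ∑ p ∈ Lo, g' p = ∑ p ∈ T', g' p :=
    Finset.sum_filter_add_sum_filter_not _ _ _
  have hHiLocard : Hi.card + Lo.card = T'.card :=
    Finset.card_filter_add_card_filter_not _
  have hT'card : T'.card + 2 = T.card := by
    have h1 : T'.card = T.card - ({x, y} : Finset V).card := Finset.card_sdiff_of_subset hxyT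
    have h2 : ({x, y} : Finset V).card = 2 := Finset.card_pair hxy
    have h3 : 2 ≤ T.card := le_trans (by omega) hcard
    omega
  have hLosum : Lo.card * g ≤ ∑ p ∈ Lo, g' p := by
    have h1 : ∀ p ∈ Lo, g ≤ g' p := by
      intro p hp
      have := (Finset.mem_filter.1 hp).2
      have hfp : f p ≤ v := by omega
      simp only [hg'def, hgdef]
      omega
    calc Lo.card * g = ∑ _p ∈ Lo, g := by rw [Finset.sum_const, smul_eq_mul]
    _ ≤ ∑ p ∈ Lo, g' p := Finset.sum_le_sum h1
  have hHiT : Hi ⊆ T := le_trans (Finset.filter_subset _ _) (Finset.sdiff_subset)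
  have hHiInj : ∀ p ∈ Hi, ∀ q ∈ Hi, g' p = g' q → p = q := by
    intro p hp q hq hpq
    by_contra hne
    have hfp : v < f p := (Finset.mem_filter.1 hp).2
    have hfq : v < f q := (Finset.mem_filter.1 hq).2
    have hfeq : f p = f q := by
      have h1 := hfle p
      have h2 := hfle q
      simp only [hg'def] at hpq
      omega
    exact absurd (hmax p (hHiT hp) q (hHiT hq) hne hfeq) (by omega)
  have hHisum : Hi.card * Hi.card ≤ 2 * ∑ p ∈ Hi, g' p + Hi.card := by
    have h1 := sq_card_le_two_sum (Hi.image g')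
    rw [Finset.sum_image hHiInj, Finset.card_image_of_injOn hHiInj] at h1
    exact h1
  have hHile : Hi.card ≤ g := by
    have hsub : Hi.image g' ⊆ Finset.range g := by
      intro r hr
      obtain ⟨p, hp, rfl⟩ := Finset.mem_image.1 hr
      have hfp : v < f p := (Finset.mem_filter.1 hp).2
      have := hfle p
      rw [Finset.mem_range]
      simp only [hg'def, hgdef]
      omega
    have := card_le_card hsub
    rw [Finset.card_image_of_injOn hHiInj, Finset.card_range] at this
    exact this
  -- cards of the partition
  have hZc : Z.card + (Sx ∪ Sy).card = w0 := Finset.card_sdiff_add_card_eq_card hUsub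
  have hdxv : Dx.card + Ic.card = v := by
    have := Finset.card_sdiff_add_card_inter Sx Sy
    rw [hSxc] at this
    exact this
  have hdyv : Dy.card + Ic.card = v := by
    have := Finset.card_sdiff_add_card_inter Sy Sx
    rw [hSyc, Finset.inter_comm] at this
    exact this
  -- final arithmetic
  have goal2 : ∑ p ∈ W, f p ≤ 2 * ∑ p ∈ T, g' p := by
    set z := Z.card
    set dxc := Dx.card
    set dyc := Dy.card
    set icc := Ic.card
    set hc2 := Hi.card
    set loc := Lo.card
    have hdy_dx : dyc = dxc := by omega
    have hgzdx : g = z + dxc := by omega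
    have hloc : w0 ≤ loc + hc2 := by omega
    have e1 : (0:ℤ) ≤ ((g:ℤ) - hc2) * ((g:ℤ) - hc2) := mul_self_nonneg _
    have e2 : ((w0:ℤ) - hc2) * g ≤ (loc:ℤ) * g := by
      have : ((w0:ℤ) - hc2) ≤ loc := by
        have := hloc; push_cast; omega
      exact mul_le_mul_of_nonneg_right this (by positivity)
    have hZsum' : ((∑ p ∈ Z, f p : ℕ) : ℤ) + z ≤ (z:ℤ) * w0 := by exact_mod_cast hZsum
    have hDxsum' : ((∑ p ∈ Dx, f p : ℕ) : ℤ) + dxc ≤ (dxc:ℤ) * (z + dxc) := by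
      exact_mod_cast hDxsum
    have hDysum' : ((∑ p ∈ Dy, f p : ℕ) : ℤ) + dyc ≤ (dyc:ℤ) * (z + dyc) := by
      exact_mod_cast hDysum
    have hIcsum' : ((∑ p ∈ Ic, f p : ℕ) : ℤ) ≤ (icc:ℤ) * z := by exact_mod_cast hIcsum
    have hLosum' : (loc:ℤ) * g ≤ ((∑ p ∈ Lo, g' p : ℕ) : ℤ) := by exact_mod_cast hLosum
    have hHisum' : (hc2:ℤ) * hc2 ≤ 2 * ((∑ p ∈ Hi, g' p : ℕ) : ℤ) + hc2 := by
      exact_mod_cast hHisum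
    have hsplitW' : ((∑ p ∈ Z, f p : ℕ) : ℤ) + ((∑ p ∈ Sx ∪ Sy, f p : ℕ) : ℤ)
        = ((∑ p ∈ W, f p : ℕ) : ℤ) := by exact_mod_cast hsplitW
    have hsumU' : ((∑ p ∈ Sx ∪ Sy, f p : ℕ) : ℤ)
        = (((∑ p ∈ Dx, f p : ℕ) : ℤ) + ((∑ p ∈ Dy, f p : ℕ) : ℤ))
          + ((∑ p ∈ Ic, f p : ℕ) : ℤ) := by exact_mod_cast hsumU
    have hsplitT' : ((∑ p ∈ T', g' p : ℕ) : ℤ) + ((g:ℤ) + g)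
        = ((∑ p ∈ T, g' p : ℕ) : ℤ) := by
      have h9 := hsplitT
      rw [hg'xy] at h9
      exact_mod_cast h9
    have hHiLo' : ((∑ p ∈ Hi, g' p : ℕ) : ℤ) + ((∑ p ∈ Lo, g' p : ℕ) : ℤ)
        = ((∑ p ∈ T', g' p : ℕ) : ℤ) := by exact_mod_cast hHiLo
    have hgzdx' : (g:ℤ) = (z:ℤ) + dxc := by exact_mod_cast hgzdx
    have hdy_dx' : (dyc:ℤ) = dxc := by exact_mod_cast hdy_dx
    have hc2g : (hc2:ℤ) ≤ g := by exact_mod_cast hHile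
    have hw0sum : w0 = z + dxc + dyc + icc := by omega
    have hfin : ((∑ p ∈ W, f p : ℕ) : ℤ) ≤ 2 * ((∑ p ∈ T, g' p : ℕ) : ℤ) := by
      refine arith_key (z:ℤ) dxc dyc icc w0 g hc2 loc _ _ _ _ _ _ _ _ _ _
        hZsum' hDxsum' hDysum' hIcsum' hsplitW' hsumU' hsplitT' hHiLo' hLosum' hHisum'
        hc2g hgzdx' hdy_dx' ?_ ?_ (Int.natCast_nonneg _) (Int.natCast_nonneg _)
        (Int.natCast_nonneg _) (Int.natCast_nonneg _) (Int.natCast_nonneg _)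
        (Int.natCast_nonneg _)
      · exact_mod_cast hloc
      · exact_mod_cast hw0sum
    exact_mod_cast hfin
  exact goal2

lemma arith_main (n cc e p q t w ab r SP SQ ST SW I IW SK BUD b : ℤ)
    (F1 : SW + (SP + SQ + ST + 2 * b) = 2 * e)
    (F2 : SP + p * (b + 2) ≤ p * (2 * n))
    (F3 : SQ + q * (b + 2) ≤ q * (2 * n))
    (F4 : ST = 2 * t + I)
    (F5 : SW ≤ w * (p + q) + IW + SK)
    (F6 : IW = I)
    (F7 : SK ≤ 2 * BUD)
    (F8 : BUD + I = t * w)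
    (F9a : t + p = b) (F9b : t + q = b)
    (F10 : ab + t = 2 * b)
    (F11 : r = ab + 2)
    (F12 : w + r = 2 * n)
    (F13 : b = n + cc) (hcc : 1 ≤ cc) (hp : 0 ≤ p) :
    e ≤ n ^ 2 - cc ^ 2 := by
  have hq' : p = q := by linarith
  subst hq'
  have hb : n + cc = b := F13.symm
  subst hb
  have ht : n + cc - p = t := by linarith
  subst ht
  have hab : 2 * (n + cc) - (n + cc - p) = ab := by linarith
  subst hab
  have hr : 2 * (n + cc) - (n + cc - p) + 2 = r := by linarith
  subst hr
  have hw : 2 * n - (2 * (n + cc) - (n + cc - p) + 2) = w := by linarith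
  subst hw
  have hkey : 0 ≤ p * (2 * cc + 3) := mul_nonneg hp (by linarith)
  nlinarith [F1, F2, F3, F4, F5, F6, F7, F8, hkey]


end Helpers

/-- A simple graph `G` contains two vertices of the same degree joined by a path of
length three if there exist four pairwise distinct vertices `a, x, y, b` such that
`ax`, `xy`, `yb` are edges of `G` and `a` and `b` have equal degree. -/
def HasEqPath3 {V : Type*} [Fintype V] [DecidableEq V] (G : SimpleGraph V)
    [DecidableRel G.Adj] : Prop :=
  ∃ a x y b : V, a ≠ x ∧ a ≠ y ∧ a ≠ b ∧ x ≠ y ∧ x ≠ b ∧ y ≠ b ∧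
    G.Adj a x ∧ G.Adj x y ∧ G.Adj y b ∧ G.degree a = G.degree b

theorem complement_lower_bound_even {V : Type*} [Fintype V] [DecidableEq V]
    (n : ℕ) (hn : 3 ≤ n) (G : SimpleGraph V) [DecidableRel G.Adj]
    (hcard : Fintype.card V = 2 * n)
    (hedges : n ^ 2 - 1 ≤ G.edgeFinset.card)
    (hpath : ¬ HasEqPath3 G)
    (β : ℕ)
    (hβ : IsGreatest {k | ∃ a b : V, a ≠ b ∧ G.degree a = k ∧ G.degree b = k} β)
    (u v : V) (huv : u ≠ v) (hu : G.degree u = β) (hv : G.degree v = β)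
    (ε : ℕ) (hε : ε = if G.Adj u v then 1 else 0)
    (c : ℤ) (hc : c = (β : ℤ) - n - ε) (hc1 : 1 ≤ c) :
    (n : ℤ) ^ 2 - n + c ^ 2 - ε ≤ (Gᶜ.edgeFinset.card : ℤ) := by
  classical
  set A := (G.neighborFinset u).erase v with hAdef
  set B := (G.neighborFinset v).erase u with hBdef
  set T := A ∩ B with hTdef
  set R : Finset V := (A ∪ B) ∪ {u, v} with hRdef
  set W := Finset.univ \ R with hWdef
  have hmemN : ∀ a b : V, b ∈ G.neighborFinset a ↔ G.Adj a b := by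
    intro a b; rw [mem_neighborFinset]
  have hmemA : ∀ {x : V}, x ∈ A ↔ (x ≠ v ∧ G.Adj u x) := by
    intro x; rw [hAdef, Finset.mem_erase, mem_neighborFinset]
  have hmemB : ∀ {x : V}, x ∈ B ↔ (x ≠ u ∧ G.Adj v x) := by
    intro x; rw [hBdef, Finset.mem_erase, mem_neighborFinset]
  have huA : u ∉ A := fun h => G.irrefl (hmemA.1 h).2
  have huB : u ∉ B := fun h => (hmemB.1 h).1 rfl
  have hvA : v ∉ A := fun h => (hmemA.1 h).1 rfl
  have hvB : v ∉ B := fun h => G.irrefl (hmemB.1 h).2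
  have huR : u ∈ R := by rw [hRdef]; exact mem_union_right _ (mem_insert_self _ _)
  have hvR : v ∈ R := by
    rw [hRdef]; exact mem_union_right _ (mem_insert_of_mem (mem_singleton_self _))
  have hWR : ∀ r ∈ W, r ∉ R := by
    intro r hr; exact (Finset.mem_sdiff.1 hr).2
  have hWprop : ∀ w ∈ W, ¬ G.Adj u w ∧ ¬ G.Adj v w ∧ w ≠ u ∧ w ≠ v := by
    intro w hw
    have hwR := hWR w hw
    have hwA : w ∉ A := fun h => hwR (by rw [hRdef]; exact mem_union_left _ (mem_union_left _ h))
    have hwB : w ∉ B := fun h => hwR (by rw [hRdef]; exact mem_union_left _ (mem_union_right _ h))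
    have hwu : w ≠ u := fun h => hwR (h ▸ huR)
    have hwv : w ≠ v := fun h => hwR (h ▸ hvR)
    exact ⟨fun hadj => hwA (hmemA.2 ⟨hwv, hadj⟩), fun hadj => hwB (hmemB.2 ⟨hwu, hadj⟩),
      hwu, hwv⟩
  have hAB : ∀ x ∈ A, ∀ y ∈ B, x ≠ y → ¬ G.Adj x y := by
    intro x hxA y hyB hne hadj
    obtain ⟨hxv, hux⟩ := hmemA.1 hxA
    obtain ⟨hyu, hvy⟩ := hmemB.1 hyB
    exact hpath ⟨u, x, y, v, hux.ne, Ne.symm hyu, huv, hne, hxv, hvy.ne', hux, hadj,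
      hvy.symm, hu.trans hv.symm⟩
  have hTprop : ∀ x ∈ T, G.Adj u x ∧ G.Adj v x ∧ x ≠ u ∧ x ≠ v := by
    intro x hx
    obtain ⟨hxv, hux⟩ := hmemA.1 (Finset.mem_of_mem_inter_left hx)
    obtain ⟨hxu, hvx⟩ := hmemB.1 (Finset.mem_of_mem_inter_right hx)
    exact ⟨hux, hvx, hxu, hxv⟩
  have hNT : ∀ x ∈ T, G.neighborFinset x = {u, v} ∪ (G.neighborFinset x ∩ W) := by
    intro x hx
    obtain ⟨hux, hvx, hxu, hxv⟩ := hTprop x hx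
    ext q
    constructor
    · intro hq
      have hadj : G.Adj x q := (hmemN x q).1 hq
      by_cases hqu : q = u
      · exact mem_union_left _ (by rw [hqu]; exact mem_insert_self _ _)
      by_cases hqv : q = v
      · exact mem_union_left _ (by rw [hqv]; exact mem_insert_of_mem (mem_singleton_self _))
      refine mem_union_right _ (Finset.mem_inter.2 ⟨hq, ?_⟩)
      rw [hWdef, Finset.mem_sdiff]
      refine ⟨mem_univ _, fun hqR => ?_⟩
      rw [hRdef] at hqR
      rcases Finset.mem_union.1 hqR with hqAB | hquv
      · rcases Finset.mem_union.1 hqAB with hqA | hqB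
        · exact hAB q hqA x (Finset.mem_of_mem_inter_right hx) hadj.ne' hadj.symm
        · exact hAB x (Finset.mem_of_mem_inter_left hx) q hqB hadj.ne hadj
      · rcases Finset.mem_insert.1 hquv with h | h
        · exact hqu h
        · exact hqv (Finset.mem_singleton.1 h)
    · intro hq
      rcases Finset.mem_union.1 hq with h | h
      · rcases Finset.mem_insert.1 h with h1 | h1
        · rw [h1]; exact (hmemN x u).2 hux.symm
        · rw [Finset.mem_singleton.1 h1]; exact (hmemN x v).2 hvx.symm
      · exact (Finset.mem_inter.1 h).1
  have huW : u ∉ W := fun h => hWR u h huR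
  have hvW : v ∉ W := fun h => hWR v h hvR
  have hdisjUV : ∀ S : Finset V, S ⊆ W → Disjoint ({u, v} : Finset V) S := by
    intro S hS
    rw [Finset.disjoint_left]
    intro r hr hr'
    have hrW := hS hr'
    rcases Finset.mem_insert.1 hr with rfl | h
    · exact huW hrW
    · rw [Finset.mem_singleton.1 h] at hrW; exact hvW hrW
  have hdegT : ∀ x ∈ T, G.degree x = 2 + (G.neighborFinset x ∩ W).card := by
    intro x hx
    have h1 : G.degree x = (G.neighborFinset x).card := rfl
    have h2 : G.degree x = ({u, v} ∪ (G.neighborFinset x ∩ W)).card := by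
      rw [h1]; conv_lhs => rw [hNT x hx]
    rw [h2, Finset.card_union_of_disjoint (hdisjUV _ inter_subset_right),
      Finset.card_pair huv]
  -- cards
  have hdNu : (G.neighborFinset u).card = β := hu
  have hdNv : (G.neighborFinset v).card = β := hv
  have hAcard : A.card + ε = β := by
    by_cases hadj : G.Adj u v
    · rw [hε, if_pos hadj, hAdef, Finset.card_erase_of_mem ((hmemN u v).2 hadj)]
      have h1 : 1 ≤ (G.neighborFinset u).card :=
        Finset.card_pos.2 ⟨v, (hmemN u v).2 hadj⟩
      omega
    · rw [hε, if_neg hadj, hAdef,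
        Finset.erase_eq_of_notMem (fun h => hadj ((hmemN u v).1 h))]
      omega
  have hBcard : B.card + ε = β := by
    by_cases hadj : G.Adj u v
    · rw [hε, if_pos hadj, hBdef, Finset.card_erase_of_mem ((hmemN v u).2 hadj.symm)]
      have h1 : 1 ≤ (G.neighborFinset v).card :=
        Finset.card_pos.2 ⟨u, (hmemN v u).2 hadj.symm⟩
      omega
    · rw [hε, if_neg hadj, hBdef,
        Finset.erase_eq_of_notMem (fun h => hadj (G.adj_symm ((hmemN v u).1 h)))]
      omega
  have hcV : (Finset.univ : Finset V).card = 2 * n := by rw [Finset.card_univ, hcard]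
  have hWRc : W.card + R.card = 2 * n := by
    rw [hWdef, Finset.card_sdiff_add_card_eq_card (Finset.subset_univ R), hcV]
  have hdisjR : Disjoint (A ∪ B) ({u, v} : Finset V) := by
    rw [Finset.disjoint_right]
    intro r hr hr'
    rcases Finset.mem_insert.1 hr with rfl | h
    · rcases Finset.mem_union.1 hr' with h' | h' <;> [exact huA h'; exact huB h']
    · rw [Finset.mem_singleton.1 h] at hr'
      rcases Finset.mem_union.1 hr' with h' | h' <;> [exact hvA h'; exact hvB h']
  have hRc : R.card = (A ∪ B).card + 2 := by
    rw [hRdef, Finset.card_union_of_disjoint hdisjR, Finset.card_pair huv]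
  have hABc : (A ∪ B).card + T.card = A.card + B.card := Finset.card_union_add_card_inter A B
  have hPc : T.card + (A \ B).card = A.card := Finset.card_inter_add_card_sdiff A B
  have hQc : T.card + (B \ A).card = B.card := by
    have h1 := Finset.card_inter_add_card_sdiff B A
    rwa [Finset.inter_comm] at h1
  have hβn : n + 1 + ε ≤ β := by
    have h1 : (n : ℤ) + 1 + ε ≤ β := by rw [hc] at hc1; linarith
    exact_mod_cast h1
  have hTW : W.card + 2 ≤ T.card := by omega
  -- the path constraint for T
  have hcon : ∀ x ∈ T, ∀ y ∈ T, x ≠ y →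
      (G.neighborFinset x ∩ W).card = (G.neighborFinset y ∩ W).card →
      ∀ p ∈ G.neighborFinset x ∩ W, ∀ q ∈ G.neighborFinset y ∩ W, p ≠ q → ¬ G.Adj p q := by
    intro x hxT y hyT hne hfeq p hp q hq hpq hadj
    have hxp : G.Adj x p := (hmemN x p).1 (Finset.mem_inter.1 hp).1
    have hyq : G.Adj y q := (hmemN y q).1 (Finset.mem_inter.1 hq).1
    have hpW : p ∈ W := (Finset.mem_inter.1 hp).2
    have hqW : q ∈ W := (Finset.mem_inter.1 hq).2
    have hxR : x ∈ R := by
      rw [hRdef]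
      exact mem_union_left _ (mem_union_left _ (Finset.mem_of_mem_inter_left hxT))
    have hyR : y ∈ R := by
      rw [hRdef]
      exact mem_union_left _ (mem_union_left _ (Finset.mem_of_mem_inter_left hyT))
    exact hpath ⟨x, p, q, y, hxp.ne, fun h => (hWR q hqW) (h ▸ hxR), hne, hpq,
      fun h => (hWR p hpW) (h.symm ▸ hyR), hyq.ne', hxp, hadj, hyq.symm,
      by rw [hdegT x hxT, hdegT y hyT, hfeq]⟩
  -- pigeonhole
  have hpig : ∃ x ∈ T, ∃ y ∈ T, x ≠ y ∧
      (G.neighborFinset x ∩ W).card = (G.neighborFinset y ∩ W).card := by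
    apply Finset.exists_ne_map_eq_of_card_lt_of_maps_to (t := Finset.range (W.card + 1))
    · rw [Finset.card_range]; omega
    · exact fun a _ => Finset.mem_range.2 (Nat.lt_succ_of_le (card_le_card inter_subset_right))
  by_cases hadj : G.Adj u v
  · exfalso
    obtain ⟨x, hxT, y, hyT, hne, hfeq⟩ := hpig
    obtain ⟨hux, hvx, hxu, hxv⟩ := hTprop x hxT
    obtain ⟨huy, hvy, hyu, hyv⟩ := hTprop y hyT
    exact hpath ⟨x, u, v, y, hxu, hxv, hne, huv, Ne.symm hyu, Ne.symm hyv,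
      hux.symm, hadj, hvy, by rw [hdegT x hxT, hdegT y hyT, hfeq]⟩
  · -- ε = 0 case
    have hε0 : ε = 0 := by rw [hε, if_neg hadj]
    set P := A \ B with hPdef
    set Q := B \ A with hQdef
    have hABsplit : A ∪ B = (P ∪ Q) ∪ T := by
      ext r
      constructor
      · intro h
        by_cases hrA : r ∈ A <;> by_cases hrB : r ∈ B
        · exact mem_union_right _ (Finset.mem_inter.2 ⟨hrA, hrB⟩)
        · exact mem_union_left _ (mem_union_left _ (Finset.mem_sdiff.2 ⟨hrA, hrB⟩))
        · exact mem_union_left _ (mem_union_right _ (Finset.mem_sdiff.2 ⟨hrB, hrA⟩))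
        · rcases Finset.mem_union.1 h with h1 | h1
          · exact absurd h1 hrA
          · exact absurd h1 hrB
      · intro h
        rcases Finset.mem_union.1 h with h1 | h1
        · rcases Finset.mem_union.1 h1 with h2 | h2
          · exact mem_union_left _ (Finset.mem_sdiff.1 h2).1
          · exact mem_union_right _ (Finset.mem_sdiff.1 h2).1
        · exact mem_union_left _ (Finset.mem_of_mem_inter_left h1)
    have hdisjPQ : Disjoint P Q := by
      rw [Finset.disjoint_left]; intro r h1 h2
      exact (Finset.mem_sdiff.1 h1).2 (Finset.mem_sdiff.1 h2).1
    have hdisjPQT : Disjoint (P ∪ Q) T := by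
      rw [Finset.disjoint_left]; intro r h1 h2
      rcases Finset.mem_union.1 h1 with h | h
      · exact (Finset.mem_sdiff.1 h).2 (Finset.mem_of_mem_inter_right h2)
      · exact (Finset.mem_sdiff.1 h).2 (Finset.mem_of_mem_inter_left h2)
    have hPdeg : ∀ x ∈ P, G.degree x + (B.card + 2) ≤ 2 * n := by
      intro x hxP
      have hxA : x ∈ A := (Finset.mem_sdiff.1 hxP).1
      have hxB : x ∉ B := (Finset.mem_sdiff.1 hxP).2
      obtain ⟨hxv, hux⟩ := hmemA.1 hxA
      have hdisj : Disjoint (G.neighborFinset x) (B ∪ {v, x}) := by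
        rw [Finset.disjoint_left]
        intro q hqN hqB'
        have hadjq : G.Adj x q := (hmemN x q).1 hqN
        rcases Finset.mem_union.1 hqB' with hqB | hqvx
        · exact hAB x hxA q hqB hadjq.ne hadjq
        · rcases Finset.mem_insert.1 hqvx with h1 | h1
          · exact hxB (hmemB.2 ⟨hux.ne', (h1 ▸ hadjq).symm⟩)
          · rw [Finset.mem_singleton.1 h1] at hadjq
            exact G.irrefl hadjq
      have hcardBvx : (B ∪ {v, x}).card = B.card + 2 := by
        rw [Finset.card_union_of_disjoint, Finset.card_pair (Ne.symm hxv)]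
        rw [Finset.disjoint_left]
        intro r h1 h2
        rcases Finset.mem_insert.1 h2 with h3 | h3
        · rw [h3] at h1; exact hvB h1
        · rw [Finset.mem_singleton.1 h3] at h1; exact hxB h1
      calc G.degree x + (B.card + 2)
          = (G.neighborFinset x).card + (B ∪ {v, x}).card := by rw [hcardBvx]; rfl
        _ = (G.neighborFinset x ∪ (B ∪ {v, x})).card :=
            (Finset.card_union_of_disjoint hdisj).symm
        _ ≤ (Finset.univ : Finset V).card := card_le_card (Finset.subset_univ _)
        _ = 2 * n := hcV
    have hQdeg : ∀ x ∈ Q, G.degree x + (A.card + 2) ≤ 2 * n := by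
      intro x hxQ
      have hxB : x ∈ B := (Finset.mem_sdiff.1 hxQ).1
      have hxA : x ∉ A := (Finset.mem_sdiff.1 hxQ).2
      obtain ⟨hxu, hvx⟩ := hmemB.1 hxB
      have hdisj : Disjoint (G.neighborFinset x) (A ∪ {u, x}) := by
        rw [Finset.disjoint_left]
        intro q hqN hqA'
        have hadjq : G.Adj x q := (hmemN x q).1 hqN
        rcases Finset.mem_union.1 hqA' with hqA | hqux
        · exact hAB q hqA x hxB hadjq.ne' hadjq.symm
        · rcases Finset.mem_insert.1 hqux with h1 | h1
          · exact hxA (hmemA.2 ⟨hvx.ne', (h1 ▸ hadjq).symm⟩)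
          · rw [Finset.mem_singleton.1 h1] at hadjq
            exact G.irrefl hadjq
      have hcardAux : (A ∪ {u, x}).card = A.card + 2 := by
        rw [Finset.card_union_of_disjoint, Finset.card_pair (Ne.symm hxu)]
        rw [Finset.disjoint_left]
        intro r h1 h2
        rcases Finset.mem_insert.1 h2 with h3 | h3
        · rw [h3] at h1; exact huA h1
        · rw [Finset.mem_singleton.1 h3] at h1; exact hxA h1
      calc G.degree x + (A.card + 2)
          = (G.neighborFinset x).card + (A ∪ {u, x}).card := by rw [hcardAux]; rfl
        _ = (G.neighborFinset x ∪ (A ∪ {u, x})).card :=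
            (Finset.card_union_of_disjoint hdisj).symm
        _ ≤ (Finset.univ : Finset V).card := card_le_card (Finset.subset_univ _)
        _ = 2 * n := hcV
    have hWdeg : ∀ w ∈ W, G.degree w ≤ P.card + Q.card
        + ((G.neighborFinset w ∩ T).card + (G.neighborFinset w ∩ W).card) := by
      intro w hw
      obtain ⟨hnuw, hnvw, hwu, hwv⟩ := hWprop w hw
      have hsub : G.neighborFinset w ⊆
          (P ∪ Q) ∪ ((G.neighborFinset w ∩ T) ∪ (G.neighborFinset w ∩ W)) := by
        intro q hqN
        have hadjq : G.Adj w q := (hmemN w q).1 hqN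
        by_cases hqW : q ∈ W
        · exact mem_union_right _ (mem_union_right _ (Finset.mem_inter.2 ⟨hqN, hqW⟩))
        · have hqR : q ∈ R := by
            by_contra hqR
            exact hqW (Finset.mem_sdiff.2 ⟨mem_univ _, hqR⟩)
          rw [hRdef] at hqR
          rcases Finset.mem_union.1 hqR with hqAB | hquv
          · rw [hABsplit] at hqAB
            rcases Finset.mem_union.1 hqAB with h1 | h1
            · exact mem_union_left _ h1
            · exact mem_union_right _ (mem_union_left _ (Finset.mem_inter.2 ⟨hqN, h1⟩))
          · exfalso
            rcases Finset.mem_insert.1 hquv with h1 | h1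
            · exact hnuw (h1 ▸ hadjq).symm
            · exact hnvw ((Finset.mem_singleton.1 h1) ▸ hadjq).symm
      calc G.degree w = (G.neighborFinset w).card := rfl
        _ ≤ ((P ∪ Q) ∪ ((G.neighborFinset w ∩ T) ∪ (G.neighborFinset w ∩ W))).card :=
            card_le_card hsub
        _ ≤ (P ∪ Q).card + ((G.neighborFinset w ∩ T) ∪ (G.neighborFinset w ∩ W)).card :=
            card_union_le _ _
        _ ≤ (P.card + Q.card)
            + ((G.neighborFinset w ∩ T).card + (G.neighborFinset w ∩ W).card) :=
            add_le_add (card_union_le _ _) (card_union_le _ _)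
    -- sums
    have hsum1 : ∑ x ∈ Finset.univ, G.degree x = 2 * G.edgeFinset.card :=
      G.sum_degrees_eq_twice_card_edges
    have hsplit1 : ∑ x ∈ W, G.degree x + ∑ x ∈ R, G.degree x
        = ∑ x ∈ Finset.univ, G.degree x := Finset.sum_sdiff (Finset.subset_univ R)
    have hsplit2 : ∑ x ∈ R, G.degree x
        = (∑ x ∈ A ∪ B, G.degree x) + (∑ x ∈ ({u, v} : Finset V), G.degree x) := by
      rw [hRdef, Finset.sum_union hdisjR]
    have hsumuv : ∑ x ∈ ({u, v} : Finset V), G.degree x = 2 * β := by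
      rw [Finset.sum_pair huv, hu, hv]; ring
    have hsplit3 : ∑ x ∈ A ∪ B, G.degree x
        = ((∑ x ∈ P, G.degree x) + (∑ x ∈ Q, G.degree x)) + ∑ x ∈ T, G.degree x := by
      rw [hABsplit, Finset.sum_union hdisjPQT, Finset.sum_union hdisjPQ]
    have hPsum : ∑ x ∈ P, G.degree x + P.card * (B.card + 2) ≤ P.card * (2 * n) := by
      have h1 : ∑ x ∈ P, (G.degree x + (B.card + 2)) ≤ ∑ _x ∈ P, (2 * n) :=
        Finset.sum_le_sum hPdeg
      simpa [Finset.sum_add_distrib, Finset.sum_const, mul_comm] using h1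
    have hQsum : ∑ x ∈ Q, G.degree x + Q.card * (A.card + 2) ≤ Q.card * (2 * n) := by
      have h1 : ∑ x ∈ Q, (G.degree x + (A.card + 2)) ≤ ∑ _x ∈ Q, (2 * n) :=
        Finset.sum_le_sum hQdeg
      simpa [Finset.sum_add_distrib, Finset.sum_const, mul_comm] using h1
    have hTsum : ∑ x ∈ T, G.degree x
        = 2 * T.card + ∑ x ∈ T, (G.neighborFinset x ∩ W).card := by
      rw [Finset.sum_congr rfl hdegT, Finset.sum_add_distrib, Finset.sum_const]
      simp [mul_comm]
    have hWsum : ∑ w ∈ W, G.degree w ≤ W.card * (P.card + Q.card)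
        + (∑ w ∈ W, (G.neighborFinset w ∩ T).card
          + ∑ w ∈ W, (G.neighborFinset w ∩ W).card) := by
      have h1 : ∑ w ∈ W, G.degree w ≤ ∑ w ∈ W, (P.card + Q.card
          + ((G.neighborFinset w ∩ T).card + (G.neighborFinset w ∩ W).card)) :=
        Finset.sum_le_sum hWdeg
      simpa [Finset.sum_add_distrib, Finset.sum_const, mul_comm] using h1
    have hfilter : ∀ (w : V) (s : Finset V),
        G.neighborFinset w ∩ s = s.filter (fun x => G.Adj w x) := by
      intro w s; ext r
      simp only [Finset.mem_inter, Finset.mem_filter, mem_neighborFinset]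
      tauto
    have hIW : ∑ w ∈ W, (G.neighborFinset w ∩ T).card
        = ∑ x ∈ T, (G.neighborFinset x ∩ W).card := by
      calc ∑ w ∈ W, (G.neighborFinset w ∩ T).card
          = ∑ w ∈ W, ∑ x ∈ T, (if G.Adj w x then 1 else 0) := by
            refine Finset.sum_congr rfl fun w _ => ?_
            rw [hfilter w T, Finset.card_filter]
        _ = ∑ x ∈ T, ∑ w ∈ W, (if G.Adj w x then 1 else 0) := Finset.sum_comm
        _ = ∑ x ∈ T, (G.neighborFinset x ∩ W).card := by
            refine Finset.sum_congr rfl fun x _ => ?_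
            rw [hfilter x W, Finset.card_filter]
            refine Finset.sum_congr rfl fun w _ => ?_
            exact if_congr (G.adj_comm w x) rfl rfl
    have hkey := key_lemma G W T hTW hcon
    have hbud : ∑ x ∈ T, (W.card - (G.neighborFinset x ∩ W).card)
        + ∑ x ∈ T, (G.neighborFinset x ∩ W).card = T.card * W.card := by
      rw [← Finset.sum_add_distrib]
      have h1 : ∀ x ∈ T, (W.card - (G.neighborFinset x ∩ W).card)
          + (G.neighborFinset x ∩ W).card = W.card :=
        fun x _ => Nat.sub_add_cancel (card_le_card inter_subset_right)
      rw [Finset.sum_congr rfl h1, Finset.sum_const, smul_eq_mul]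
    have hAb : A.card = β := by omega
    have hBb : B.card = β := by omega
    have hF1 : ∑ x ∈ W, G.degree x + (∑ x ∈ P, G.degree x + ∑ x ∈ Q, G.degree x
        + ∑ x ∈ T, G.degree x + 2 * β) = 2 * G.edgeFinset.card := by
      omega
    have hE : (G.edgeFinset.card : ℤ) ≤ (n : ℤ) ^ 2 - c ^ 2 := by
      refine arith_main (n : ℤ) c (G.edgeFinset.card : ℤ) (P.card : ℤ) (Q.card : ℤ)
        (T.card : ℤ) (W.card : ℤ) (((A ∪ B).card : ℕ) : ℤ) (R.card : ℤ)
        ((∑ x ∈ P, G.degree x : ℕ) : ℤ) ((∑ x ∈ Q, G.degree x : ℕ) : ℤ)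
        ((∑ x ∈ T, G.degree x : ℕ) : ℤ) ((∑ x ∈ W, G.degree x : ℕ) : ℤ)
        ((∑ x ∈ T, (G.neighborFinset x ∩ W).card : ℕ) : ℤ)
        ((∑ w ∈ W, (G.neighborFinset w ∩ T).card : ℕ) : ℤ)
        ((∑ w ∈ W, (G.neighborFinset w ∩ W).card : ℕ) : ℤ)
        ((∑ x ∈ T, (W.card - (G.neighborFinset x ∩ W).card) : ℕ) : ℤ)
        (β : ℤ) ?_ ?_ ?_ ?_ ?_ ?_ ?_ ?_ ?_ ?_ ?_ ?_ ?_ ?_ ?_ ?_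
      · exact_mod_cast hF1
      · have h2 := hPsum; rw [hBb] at h2; exact_mod_cast h2
      · have h2 := hQsum; rw [hAb] at h2; exact_mod_cast h2
      · exact_mod_cast hTsum
      · have h2 := hWsum
        push_cast at h2 ⊢
        linarith
      · exact_mod_cast hIW
      · exact_mod_cast hkey
      · exact_mod_cast hbud
      · have h2 : T.card + P.card = β := by omega
        exact_mod_cast h2
      · have h2 : T.card + Q.card = β := by omega
        exact_mod_cast h2
      · have h2 : (A ∪ B).card + T.card = 2 * β := by omega
        exact_mod_cast h2
      · exact_mod_cast hRc
      · exact_mod_cast hWRc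
      · rw [hc, hε0]; push_cast; ring
      · exact hc1
      · exact Int.natCast_nonneg _
    -- complement edge count
    have hcompl : ∀ x : V, Gᶜ.degree x + G.degree x + 1 = 2 * n := by
      intro x
      have h1 := G.degree_lt_card_verts x
      have h2 : Gᶜ.degree x = Fintype.card V - 1 - G.degree x := G.degree_compl x
      rw [hcard] at h1 h2
      omega
    have hsumc : ∑ x ∈ Finset.univ, Gᶜ.degree x = 2 * Gᶜ.edgeFinset.card :=
      Gᶜ.sum_degrees_eq_twice_card_edges
    have htot : 2 * Gᶜ.edgeFinset.card + 2 * G.edgeFinset.card + 2 * n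
        = 2 * n * (2 * n) := by
      have h1 : ∑ x ∈ Finset.univ, (Gᶜ.degree x + G.degree x + 1)
          = ∑ _x ∈ Finset.univ, (2 * n) :=
        Finset.sum_congr rfl fun x _ => hcompl x
      rw [Finset.sum_add_distrib, Finset.sum_add_distrib, Finset.sum_const,
        Finset.sum_const, hsumc, hsum1, hcV, smul_eq_mul, smul_eq_mul, mul_one] at h1
      exact h1
    have htot' : 2 * (Gᶜ.edgeFinset.card : ℤ) + 2 * (G.edgeFinset.card : ℤ) + 2 * n
        = 2 * n * (2 * n) := by exact_mod_cast htot
    rw [hε0]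
    push_cast
    linarith [hE, htot']
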